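/- Let E be a compact convex subset of a finite-dimensional real inner product space V, let F ⊆ E be an exposed face, and let G be a compact subgroup of the orthogonal group O(V) preserving both E and F. Then the cone C_F = { u ∈ V : F = F_u(E) } contains a G-fixed vector. -/

import Mathlib

open RealInnerProductSpace

/-- The exposed face of `E` defined by `u`:
`F_u(E) = { x ∈ E : ⟨x,u⟩ = max_{y ∈ E} ⟨y,u⟩ }`. -/
def exposedFaceOf {V : Type*} [NormedAddCommGroup V] [InnerProductSpace ℝ V]
    (E : Set V) (u : V) : Set V :=
  {x ∈ E | ∀ y ∈ E, ⟪y, u⟫ ≤ ⟪x, u⟫}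

/-!
Two functionals exposing the same nonempty face `F` are both maximised on `F`, so any positive
combination of them exposes `F` as well: the cone `C_F` is convex. Since `G` preserves `E` and
`F`, it maps `C_F` to itself, so `C_F` contains the convex hull `K` of a `G`-orbit. In finite
dimensions `K` is compact (Carathéodory), and its point of least norm is unique by strict
convexity of the norm; as `G` acts on `K` by isometries, that point is `G`-fixed.
-/

theorem IsCompact.convexHull {E : Type*} [NormedAddCommGroup E] [NormedSpace ℝ E]
    [FiniteDimensional ℝ E] {s : Set E} (hs : IsCompact s) : IsCompact (convexHull ℝ s) := by
  -- Carathéodory: combinations of at most `finrank + 1` points of `s` suffice.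
  have hunion : _root_.convexHull ℝ s = ⋃ k : Fin (Module.finrank ℝ E + 2),
      (fun p : (Fin k → ℝ) × (Fin k → E) => ∑ i, p.1 i • p.2 i) ''
        (stdSimplex ℝ (Fin k) ×ˢ Set.univ.pi fun _ => s) := by
    refine Set.Subset.antisymm (fun x hx => ?_) (Set.iUnion_subset fun k => ?_)
    · obtain ⟨ι, _, z, w, hzs, hindep, hwpos, hwsum, rfl⟩ :=
        eq_pos_convex_span_of_mem_convexHull hx
      have hcard : Fintype.card ι < Module.finrank ℝ E + 2 := by
        have := hindep.card_le_finrank_succ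
        have := Submodule.finrank_le (vectorSpan ℝ (Set.range z))
        omega
      let e := Fintype.equivFin ι
      refine Set.mem_iUnion.2 ⟨⟨_, hcard⟩, (w ∘ e.symm, z ∘ e.symm),
        ⟨⟨fun j => (hwpos _).le, ?_⟩, fun j _ => hzs ⟨_, rfl⟩⟩, ?_⟩
      · rw [← hwsum]
        exact e.symm.sum_comp w
      · exact e.symm.sum_comp fun i => w i • z i
    · rintro _ ⟨⟨w, z⟩, ⟨⟨hw0, hw1⟩, hzs⟩, rfl⟩
      exact (convex_convexHull ℝ s).sum_mem (fun i _ => hw0 i) hw1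
        fun i _ => subset_convexHull ℝ s (hzs i trivial)
  rw [hunion]
  exact isCompact_iUnion fun k =>
    ((isCompact_stdSimplex ℝ (Fin k)).prod (isCompact_univ_pi fun _ => hs)).image (by fun_prop)

theorem IsCompact.exists_mem_forall_apply_eq {V ι : Type*} [NormedAddCommGroup V]
    [NormedSpace ℝ V] [StrictConvexSpace ℝ V] {K : Set V} (hK : IsCompact K)
    (hKconv : Convex ℝ K) (hKne : K.Nonempty) (f : ι → V ≃ₗᵢ[ℝ] V)
    (hf : ∀ i, Set.MapsTo (f i) K K) : ∃ v ∈ K, ∀ i, f i v = v := by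
  obtain ⟨v, hvK, hvmin⟩ := hK.exists_isMinOn hKne continuous_norm.continuousOn
  refine ⟨v, hvK, fun i => by_contra fun hne => ?_⟩
  have hmid : (1 / 2 : ℝ) • (f i v + v) ∈ K := by
    rw [smul_add]
    exact hKconv (hf i hvK) hvK (by norm_num) (by norm_num) (by norm_num)
  have hlt := (norm_midpoint_lt_iff ((f i).norm_map v)).2 hne
  rw [(f i).norm_map] at hlt
  exact (hvmin hmid).not_gt hlt

theorem exists_fixed_mem_of_convex {G V : Type*} [Group G] [TopologicalSpace G]
    [CompactSpace G] [NormedAddCommGroup V] [InnerProductSpace ℝ V] [FiniteDimensional ℝ V]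
    (ρ : G →* (V ≃ₗᵢ[ℝ] V)) {u : V} (hu : Continuous fun g => ρ g u) {C : Set V}
    (hC : Convex ℝ C) (horbit : ∀ g, ρ g u ∈ C) : ∃ v ∈ C, ∀ g, ρ g v = v := by
  set K := convexHull ℝ (Set.range fun g => ρ g u)
  have hKinv : ∀ g, Set.MapsTo (ρ g) K K := fun g => by
    refine Set.mapsTo_iff_image_subset.2 <|
      (LinearMap.image_convexHull ((ρ g).toLinearEquiv : V →ₗ[ℝ] V) _).trans_subset
        (convexHull_mono ?_)
    rintro _ ⟨_, ⟨h, rfl⟩, rfl⟩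
    exact ⟨g * h, by simp⟩
  obtain ⟨v, hvK, hv⟩ := (isCompact_range hu).convexHull.exists_mem_forall_apply_eq
    (convex_convexHull ℝ _) ⟨u, subset_convexHull ℝ _ ⟨1, by simp⟩⟩ ρ hKinv
  exact ⟨v, convexHull_min (Set.range_subset_iff.2 horbit) hC hvK, hv⟩

section ExposedFace

variable {V : Type*} [NormedAddCommGroup V] [InnerProductSpace ℝ V] {E F : Set V}

theorem IsCompact.exposedFaceOf_nonempty (hE : IsCompact E) (hne : E.Nonempty) (u : V) :
    (exposedFaceOf E u).Nonempty := by
  obtain ⟨x, hxE, hx⟩ :=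
    hE.exists_isMaxOn hne (continuous_id.inner continuous_const (𝕜 := ℝ)).continuousOn
  exact ⟨x, hxE, fun y hy => hx hy⟩

theorem mem_exposedFaceOf_iff_of_mem {u x₀ x : V} (hx₀ : x₀ ∈ exposedFaceOf E u)
    (hx : x ∈ E) : x ∈ exposedFaceOf E u ↔ ⟪x₀, u⟫ ≤ ⟪x, u⟫ :=
  ⟨fun h => h.2 x₀ hx₀.1, fun h => ⟨hx, fun y hy => (hx₀.2 y hy).trans h⟩⟩

theorem exposedFaceOf_smul {c : ℝ} (hc : 0 < c) (u : V) :
    exposedFaceOf E (c • u) = exposedFaceOf E u := by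
  ext x
  simp only [exposedFaceOf, Set.mem_ofPred_eq, real_inner_smul_right, mul_le_mul_iff_right₀ hc]

theorem exposedFaceOf_add {u w x₀ : V} (hu : x₀ ∈ exposedFaceOf E u)
    (hw : x₀ ∈ exposedFaceOf E w) :
    exposedFaceOf E (u + w) = exposedFaceOf E u ∩ exposedFaceOf E w := by
  ext x
  refine ⟨fun hx => ?_, fun ⟨hxu, hxw⟩ => ⟨hxu.1, fun y hy => ?_⟩⟩
  · have hsum := hx.2 x₀ hu.1
    have hxu := hu.2 x hx.1
    have hxw := hw.2 x hx.1
    rw [inner_add_right, inner_add_right] at hsum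
    exact ⟨(mem_exposedFaceOf_iff_of_mem hu hx.1).2 (by linarith),
      (mem_exposedFaceOf_iff_of_mem hw hx.1).2 (by linarith)⟩
  · rw [inner_add_right, inner_add_right]
    exact add_le_add (hxu.2 y hy) (hxw.2 y hy)

theorem convex_setOf_eq_exposedFaceOf (hF : F.Nonempty) :
    Convex ℝ {u | F = exposedFaceOf E u} := by
  obtain ⟨x₀, hx₀⟩ := hF
  refine convex_iff_pairwise_pos.2 fun u hu w hw _ a b ha hb _ => ?_
  have hsmul : ∀ {c : ℝ} {v : V}, 0 < c → F = exposedFaceOf E v →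
      F = exposedFaceOf E (c • v) := fun hc hv => by rw [exposedFaceOf_smul hc, hv]
  have hau := hsmul ha hu
  have hbw := hsmul hb hw
  show F = _
  rw [exposedFaceOf_add (hau ▸ hx₀) (hbw ▸ hx₀), ← hau, ← hbw, Set.inter_self]

theorem LinearIsometryEquiv.image_exposedFaceOf {W : Type*} [NormedAddCommGroup W]
    [InnerProductSpace ℝ W] (φ : V ≃ₗᵢ[ℝ] W) (E : Set V) (u : V) :
    φ '' exposedFaceOf E u = exposedFaceOf (φ '' E) (φ u) := by
  ext x
  obtain ⟨x, rfl⟩ := φ.surjective x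
  simp [exposedFaceOf, φ.injective.mem_set_image, φ.inner_map_map]

end ExposedFace

theorem stmt_4_general {G V : Type*} [Group G] [TopologicalSpace G]
    [CompactSpace G]
    [NormedAddCommGroup V] [InnerProductSpace ℝ V] [FiniteDimensional ℝ V]
    (ρ : G →* (V ≃ₗᵢ[ℝ] V)) (hρ : ∀ v : V, Continuous fun g => ρ g v)
    (E F : Set V) (hEcomp : IsCompact E)
    (hFexp : ∃ u : V, u ≠ 0 ∧ F = exposedFaceOf E u)
    (hE : ∀ g : G, ρ g '' E = E) (hF : ∀ g : G, ρ g '' F = F) :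
    ∃ u : V, F = exposedFaceOf E u ∧ ∀ g : G, ρ g u = u := by
  obtain ⟨u, -, hFu⟩ := hFexp
  rcases E.eq_empty_or_nonempty with rfl | hEne
  · exact ⟨0, by simp [hFu, exposedFaceOf], fun g => map_zero (ρ g)⟩
  have hC : Convex ℝ {w | F = exposedFaceOf E w} :=
    convex_setOf_eq_exposedFaceOf (hFu ▸ hEcomp.exposedFaceOf_nonempty hEne u)
  have horbit : ∀ g, ρ g u ∈ {w | F = exposedFaceOf E w} := fun g => by
    rw [Set.mem_ofPred_eq, ← hE g, ← (ρ g).image_exposedFaceOf, ← hFu, hF g]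
  exact exists_fixed_mem_of_convex ρ (hρ u) hC horbit

/-- If `F` is an exposed face of a compact convex set `E` in a finite-dimensional real
inner product space and a compact group `G` acts orthogonally on `V` preserving `E` and
`F`, then the cone `C_F = { u : F = F_u(E) }` contains a `G`-fixed vector. -/
theorem stmt_4 {G V : Type*} [Group G] [TopologicalSpace G] [IsTopologicalGroup G]
    [CompactSpace G]
    [NormedAddCommGroup V] [InnerProductSpace ℝ V] [FiniteDimensional ℝ V]
    (ρ : G →* (V ≃ₗᵢ[ℝ] V)) (hρ : ∀ v : V, Continuous fun g => ρ g v)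
    (E F : Set V) (hEcomp : IsCompact E) (hEconv : Convex ℝ E)
    (hFexp : ∃ u : V, u ≠ 0 ∧ F = exposedFaceOf E u)
    (hE : ∀ g : G, ρ g '' E = E) (hF : ∀ g : G, ρ g '' F = F) :
    ∃ u : V, F = exposedFaceOf E u ∧ ∀ g : G, ρ g u = u :=
  stmt_4_general ρ hρ E F hEcomp hFexp hE hF
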